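/- Let n ≥ 2, c ≥ 1, and let e_{n,c} be the order of the image of the element b^{-n} a^{-n} (ab)^n in F/[F, R_{n,c}] (this image lies in the Schur multiplier M(R(2,n;c))). Then for every free group F̂ (on an arbitrary set) and every normal subgroup R̂ of F̂ such that F̂/R̂ is finite, has exponent dividing n, and is nilpotent of class at most c, the exponent of (R̂ ∩ [F̂,F̂])/[F̂,R̂] divides n·e_{n,c}. -/

import Mathlib

/-!
Put `G = F̂/[F̂,R̂]`. Since `F̂/R̂` has exponent dividing `n`, every `n`-th power lies in `R̂`, so
it is central in `G`. Every instance `y⁻ⁿ x⁻ⁿ (xy)ⁿ` of the defect word in `G` is then central, and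
it is the image of `w = b⁻ⁿ a⁻ⁿ (ab)ⁿ` under a map `F/[F,R_{n,c}] → G`, since `F̂/R̂` is a quotient of
`R(2,n;c)`; hence its order divides `e`. Modulo the central subgroup of elements killed by `e`,
`x ↦ xⁿ` is therefore a homomorphism with commuting values, so it kills `[F̂,F̂]`: for
`x ∈ R̂ ∩ [F̂,F̂]` the image of `xⁿ` is killed by `e`.
-/

namespace Schur

abbrev F : Type := FreeGroup (Fin 2)

def a : F := FreeGroup.of 0
def b : F := FreeGroup.of 1

/-- The element `b⁻ⁿ a⁻ⁿ (ab)ⁿ`. -/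
def w (n : ℕ) : F := (b ^ n)⁻¹ * (a ^ n)⁻¹ * (a * b) ^ n

/-- `R_{n,c}`: the normal closure of the `n`-th powers together with `γ_{c+1}(F)`.
Note `γ_{c+1}(F) = lowerCentralSeries F c` since `lowerCentralSeries F 0 = γ₁(F) = F`. -/
def Rnc (n c : ℕ) : Subgroup F :=
  Subgroup.normalClosure ({x : F | ∃ y : F, x = y ^ n} ∪ (Subgroup.lowerCentralSeries (⊤ : Subgroup F) c : Set F))

instance (n c : ℕ) : (Rnc n c).Normal := Subgroup.normalClosure_normal

open Subgroup

open scoped commutatorElement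

section

variable {G H : Type*} [Group G] [Group H]

def powDefect (n : ℕ) (x y : G) : G := (y ^ n)⁻¹ * (x ^ n)⁻¹ * (x * y) ^ n

theorem mul_pow_eq_mul_mul_powDefect (n : ℕ) (x y : G) :
    (x * y) ^ n = x ^ n * y ^ n * powDefect n x y := by
  simp only [powDefect]
  group

theorem map_powDefect (f : G →* H) (n : ℕ) (x y : G) :
    f (powDefect n x y) = powDefect n (f x) (f y) := by
  simp only [powDefect, map_mul, map_inv, map_pow]

variable (G) in
def centralPowKer (e : ℕ) : Subgroup G where
  carrier := {z | z ∈ center G ∧ z ^ e = 1}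
  one_mem' := ⟨one_mem _, one_pow e⟩
  mul_mem' := by
    rintro z w ⟨hz, hze⟩ ⟨hw, hwe⟩
    refine ⟨mul_mem hz hw, ?_⟩
    rw [(Commute.symm (mem_center_iff.mp hz w)).mul_pow, hze, hwe, one_mul]
  inv_mem' := by
    rintro z ⟨hz, hze⟩
    exact ⟨inv_mem hz, by rw [inv_pow, hze, inv_one]⟩

instance (e : ℕ) : (centralPowKer G e).Normal where
  conj_mem z hz g := by rwa [mem_center_iff.mp hz.1 g, mul_inv_cancel_right]

theorem commutator_le_ker_of_commute (f : G →* H) (hf : ∀ x y, Commute (f x) (f y)) :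
    commutator G ≤ f.ker := by
  rw [commutator_eq_closure, closure_le]
  rintro _ ⟨x, y, rfl⟩
  rw [SetLike.mem_coe, MonoidHom.mem_ker, map_commutatorElement,
    commutatorElement_eq_one_iff_commute]
  exact hf x y

theorem pow_mul_eq_one_of_mem_commutator {n e : ℕ} (hcen : ∀ x : G, x ^ n ∈ center G)
    (hdef : ∀ x y : G, powDefect n x y ^ e = 1) {x : G} (hx : x ∈ commutator G) :
    x ^ (n * e) = 1 := by
  let W := centralPowKer G e
  have hdefW (x y : G) : powDefect n x y ∈ W :=
    ⟨mul_mem (mul_mem (inv_mem (hcen y)) (inv_mem (hcen x))) (hcen _), hdef x y⟩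
  let f : G →* G ⧸ W := MonoidHom.mk' (fun x => ((x ^ n : G) : G ⧸ W)) fun x y => by
    rw [mul_pow_eq_mul_mul_powDefect, QuotientGroup.mk_mul,
      (QuotientGroup.eq_one_iff _).mpr (hdefW x y), mul_one, QuotientGroup.mk_mul]
  have hf (x y : G) : Commute (f x) (f y) :=
    (Commute.symm (mem_center_iff.mp (hcen x) (y ^ n))).map (QuotientGroup.mk' W)
  have hxW : x ^ n ∈ W := (QuotientGroup.eq_one_iff _).mp (commutator_le_ker_of_commute f hf hx)
  rw [pow_mul]
  exact hxW.2

theorem pow_mem_of_exponent_quotient_dvd {R : Subgroup G} [R.Normal] {n : ℕ}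
    (hexp : Monoid.exponent (G ⧸ R) ∣ n) (x : G) : x ^ n ∈ R := by
  rw [← QuotientGroup.eq_one_iff, QuotientGroup.mk_pow]
  exact orderOf_dvd_iff_pow_eq_one.mp ((Monoid.order_dvd_exponent _).trans hexp)

theorem lowerCentralSeries_le_comap_of_quotient_eq_bot {R : Subgroup G} [R.Normal] {c : ℕ}
    (hnil : Subgroup.lowerCentralSeries (⊤ : Subgroup (G ⧸ R)) c = ⊥) (φ : H →* G) :
    Subgroup.lowerCentralSeries (⊤ : Subgroup H) c ≤ R.comap φ := by
  intro z hz
  rw [mem_comap, ← QuotientGroup.eq_one_iff, ← mem_bot, ← hnil, ← QuotientGroup.mk'_apply,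
    ← MonoidHom.comp_apply]
  have hmap := map_lowerCentralSeries (⊤ : Subgroup H) ((QuotientGroup.mk' R).comp φ) c
  exact lowerCentralSeries_mono c le_top (hmap ▸ mem_map_of_mem _ hz)

theorem mk_mem_center_of_mem {R : Subgroup G} [R.Normal] {r : G} (hr : r ∈ R) :
    (r : G ⧸ ⁅(⊤ : Subgroup G), R⁆) ∈ center (G ⧸ ⁅(⊤ : Subgroup G), R⁆) := by
  have hRcen : R.map (QuotientGroup.mk' ⁅(⊤ : Subgroup G), R⁆) ≤ center _ := by
    rw [← commutator_top_left_eq_bot_iff_le_center,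
      ← map_top_of_surjective _ (QuotientGroup.mk'_surjective _), ← map_commutator,
      QuotientGroup.map_mk'_self]
  exact hRcen (mem_map_of_mem _ hr)

theorem commutator_top_le_comap {K : Subgroup H} {R : Subgroup G} {φ : H →* G}
    (h : K ≤ R.comap φ) : ⁅(⊤ : Subgroup H), K⁆ ≤ ⁅(⊤ : Subgroup G), R⁆.comap φ := by
  rw [← map_le_iff_le_comap, map_commutator]
  exact commutator_mono le_top (map_le_iff_le_comap.mpr h)

end

section

variable {G : Type*} [Group G] {R : Subgroup G} [R.Normal] {n c : ℕ}

theorem w_eq_powDefect (n : ℕ) : w n = powDefect n a b := rfl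

theorem Rnc_le_comap (hexp : Monoid.exponent (G ⧸ R) ∣ n)
    (hnil : Subgroup.lowerCentralSeries (⊤ : Subgroup (G ⧸ R)) c = ⊥) (φ : F →* G) :
    Rnc n c ≤ R.comap φ := by
  apply normalClosure_le_normal
  rintro z (⟨u, rfl⟩ | hz)
  · rw [SetLike.mem_coe, mem_comap, map_pow]
    exact pow_mem_of_exponent_quotient_dvd hexp (φ u)
  · exact lowerCentralSeries_le_comap_of_quotient_eq_bot hnil φ hz

theorem powDefect_pow_orderOf_w_eq_one (hexp : Monoid.exponent (G ⧸ R) ∣ n)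
    (hnil : Subgroup.lowerCentralSeries (⊤ : Subgroup (G ⧸ R)) c = ⊥)
    (p q : G ⧸ ⁅(⊤ : Subgroup G), R⁆) :
    powDefect n p q ^ orderOf ((w n : F) : F ⧸ ⁅(⊤ : Subgroup F), Rnc n c⁆) = 1 := by
  obtain ⟨x, rfl⟩ := QuotientGroup.mk_surjective p
  obtain ⟨y, rfl⟩ := QuotientGroup.mk_surjective q
  let φ : F →* G := FreeGroup.lift ![x, y]
  let φbar := QuotientGroup.map _ _ φ (commutator_top_le_comap (Rnc_le_comap hexp hnil φ))
  have hw : φbar (w n : F ⧸ ⁅(⊤ : Subgroup F), Rnc n c⁆) =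
      powDefect n (x : G ⧸ _) (y : G ⧸ _) := by
    rw [QuotientGroup.map_mk, w_eq_powDefect, map_powDefect, ← QuotientGroup.mk'_apply,
      map_powDefect]
    simp [φ, a, b]
  exact orderOf_dvd_iff_pow_eq_one.mp (hw ▸ orderOf_map_dvd φbar _)

end

theorem statement1_general (n c : ℕ)
    (e : ℕ) (he : e = orderOf ((w n : F) : F ⧸ ⁅(⊤ : Subgroup F), Rnc n c⁆))
    {α : Type} (R : Subgroup (FreeGroup α)) [R.Normal]
    (hexp : Monoid.exponent (FreeGroup α ⧸ R) ∣ n)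
    (hnil : Subgroup.lowerCentralSeries (⊤ : Subgroup (FreeGroup α ⧸ R)) c = ⊥) :
    Monoid.exponent ((R ⊓ commutator (FreeGroup α)).map
      (QuotientGroup.mk' ⁅(⊤ : Subgroup (FreeGroup α)), R⁆)) ∣ n * e := by
  subst he
  have hcen (p : FreeGroup α ⧸ ⁅(⊤ : Subgroup (FreeGroup α)), R⁆) : p ^ n ∈ center _ := by
    obtain ⟨x, rfl⟩ := QuotientGroup.mk_surjective p
    exact mk_mem_center_of_mem (pow_mem_of_exponent_quotient_dvd hexp x)
  apply Monoid.exponent_dvd_of_forall_pow_eq_one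
  rintro ⟨_, x, hx, rfl⟩
  have hx' : QuotientGroup.mk' ⁅(⊤ : Subgroup (FreeGroup α)), R⁆ x ∈
      (commutator _).map (QuotientGroup.mk' _) :=
    mem_map_of_mem _ hx.2
  rw [map_commutator_eq] at hx'
  exact Subtype.ext (pow_mul_eq_one_of_mem_commutator hcen
    (powDefect_pow_orderOf_w_eq_one hexp hnil) (commutator_mono le_top le_top hx'))

theorem statement1 (n c : ℕ) (hn : 2 ≤ n) (hc : 1 ≤ c)
    (e : ℕ) (he : e = orderOf ((w n : F) : F ⧸ ⁅(⊤ : Subgroup F), Rnc n c⁆))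
    {α : Type} (R : Subgroup (FreeGroup α)) [R.Normal]
    [Finite (FreeGroup α ⧸ R)]
    (hexp : Monoid.exponent (FreeGroup α ⧸ R) ∣ n)
    (hnil : Subgroup.lowerCentralSeries (⊤ : Subgroup (FreeGroup α ⧸ R)) c = ⊥) :
    Monoid.exponent ((R ⊓ commutator (FreeGroup α)).map
      (QuotientGroup.mk' ⁅(⊤ : Subgroup (FreeGroup α)), R⁆)) ∣ n * e :=
  statement1_general n c e he R hexp hnil

end Schur
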